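/- arXiv:1404.2245 — 2 statements merged into one kernel-verified Lean document; each statement's English description precedes it below -/
import Mathlib

section
/- Limiting behavior at α → 0 of the fractional seminorm: for every f ∈ C_c^∞(ℝⁿ), lim_{α→0⁺} α · ‖f‖_{Λ̇^{1,1}_α} = 2 n ω_n ‖f‖_{L¹}, where ω_n is the volume of the unit ball in ℝⁿ. -/
open MeasureTheory Set ENNReal Filter Topology

noncomputable def besov (n : ℕ) (α : ℝ) (f : EuclideanSpace ℝ (Fin n) → ℝ) : ℝ≥0∞ :=
  ∫⁻ h : EuclideanSpace ℝ (Fin n), ∫⁻ x : EuclideanSpace ℝ (Fin n),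
    ENNReal.ofReal (|f (x + h) - f x| / ‖h‖ ^ ((n : ℝ) + α)) ∂volume ∂volume

noncomputable def fracPer (n : ℕ) (α : ℝ) (E : Set (EuclideanSpace ℝ (Fin n))) : ℝ≥0∞ :=
  ∫⁻ x in E, ∫⁻ y in Eᶜ, ENNReal.ofReal (‖x - y‖ ^ (-((n : ℝ) + α))) ∂volume ∂volume

def IsTest {n : ℕ} (f : EuclideanSpace ℝ (Fin n) → ℝ) : Prop :=
  ContDiff ℝ (⊤ : ℕ∞) f ∧ HasCompactSupport f

noncomputable def capK (n : ℕ) (α : ℝ) (K : Set (EuclideanSpace ℝ (Fin n))) : ℝ≥0∞ :=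
  ⨅ (f : EuclideanSpace ℝ (Fin n) → ℝ) (_ : IsTest f) (_ : ∀ x ∈ K, 1 ≤ f x), besov n α f

noncomputable def capSet (n : ℕ) (α : ℝ) (E : Set (EuclideanSpace ℝ (Fin n))) : ℝ≥0∞ :=
  ⨅ (O : Set (EuclideanSpace ℝ (Fin n))) (_ : IsOpen O) (_ : E ⊆ O),
    ⨆ (K : Set (EuclideanSpace ℝ (Fin n))) (_ : IsCompact K) (_ : K ⊆ O), capK n α K

def HasSmoothBoundary {n : ℕ} (O : Set (EuclideanSpace ℝ (Fin n))) : Prop :=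
  ∃ g : EuclideanSpace ℝ (Fin n) → ℝ, ContDiff ℝ (⊤ : ℕ∞) g ∧ O = {x | g x < 0} ∧
    ∀ x ∈ frontier O, fderiv ℝ g x ≠ 0

noncomputable def capInt (n : ℕ) (α : ℝ) (f : EuclideanSpace ℝ (Fin n) → ℝ) : ℝ≥0∞ :=
  ∫⁻ t in Set.Ioi (0 : ℝ),
    (capK n α {x | t ≤ |f x|}) ^ ((n : ℝ) / ((n : ℝ) - α)) *
      ENNReal.ofReal (((n : ℝ) / ((n : ℝ) - α)) * t ^ (α / ((n : ℝ) - α)))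

section AuxStmt9

theorem lintegral_fun_norm_addHaar' {E : Type*} [NormedAddCommGroup E] [NormedSpace ℝ E]
    [MeasurableSpace E] [Nontrivial E] (μ : Measure E) [FiniteDimensional ℝ E] [BorelSpace E]
    [μ.IsAddHaarMeasure] (f : ℝ → ℝ≥0∞) (hf : Measurable f) :
    ∫⁻ x, f ‖x‖ ∂μ = Module.finrank ℝ E * μ (Metric.ball 0 1) *
      ∫⁻ y in Ioi (0 : ℝ), ENNReal.ofReal (y ^ (Module.finrank ℝ E - 1)) * f y := by
  calc
    ∫⁻ x, f ‖x‖ ∂μ = ∫⁻ x : ({(0)}ᶜ : Set E), f ‖x.1‖ ∂(μ.comap (↑)) := by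
      rw [lintegral_subtype_comap (measurableSet_singleton _).compl fun x ↦ f (‖x‖),
        MeasureTheory.restrict_compl_singleton]
    _ = ∫⁻ x : Metric.sphere (0 : E) 1 × Ioi (0 : ℝ), f x.2
        ∂μ.toSphere.prod (.volumeIoiPow (Module.finrank ℝ E - 1)) := by
      have := μ.measurePreserving_homeomorphUnitSphereProd.lintegral_comp
        ((hf.comp measurable_subtype_coe).comp measurable_snd)
      simpa [Function.comp_def] using this
    _ = μ.toSphere univ * ∫⁻ y : Ioi (0 : ℝ), f y
        ∂(.volumeIoiPow (Module.finrank ℝ E - 1)) := by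
      rw [MeasureTheory.lintegral_prod
        (f := fun p : ↥(Metric.sphere (0:E) 1) × ↥(Ioi (0:ℝ)) => f ↑p.2)
        (((hf.comp measurable_subtype_coe).comp measurable_snd).aemeasurable)]
      simp [lintegral_const, mul_comm]
    _ = _ := by
      rw [Measure.toSphere_apply_univ, Measure.volumeIoiPow,
        lintegral_withDensity_eq_lintegral_mul _
          (f := fun r : ↥(Ioi (0:ℝ)) => ENNReal.ofReal (r.1 ^ (Module.finrank ℝ E - 1)))
          (by exact ((measurable_subtype_coe.pow_const _).ennreal_ofReal))
          (g := fun y : ↥(Ioi (0:ℝ)) => f ↑y)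
          (hf.comp measurable_subtype_coe)]
      simp only [Pi.mul_apply]
      rw [lintegral_subtype_comap measurableSet_Ioi
        (fun y : ℝ => ENNReal.ofReal (y ^ (Module.finrank ℝ E - 1)) * f y)]

theorem lintegral_Ioi_rpow_exact {R α : ℝ} (hR : 0 < R) (hα : 0 < α) :
    ∫⁻ y in Ioi R, ENNReal.ofReal (y ^ (-1 - α)) ∂volume
      = ENNReal.ofReal (R ^ (-α) / α) := by
  rw [← ofReal_integral_eq_lintegral_ofReal
    (integrableOn_Ioi_rpow_of_lt (by linarith) hR)
    ((ae_restrict_mem measurableSet_Ioi).mono fun y hy =>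
      Real.rpow_nonneg (le_of_lt (hR.trans hy)) _)]
  rw [integral_Ioi_rpow_of_lt (by linarith) hR]
  congr 1
  have : -1 - α + 1 = -α := by ring
  rw [this]
  field_simp

end AuxStmt9

set_option maxHeartbeats 1000000 in
theorem stmt9 (n : ℕ) (hn : 1 ≤ n) (f : EuclideanSpace ℝ (Fin n) → ℝ) (hf : IsTest f) :
    Tendsto (fun α : ℝ => ENNReal.ofReal α * besov n α f) (𝓝[>] (0 : ℝ))
      (𝓝 (2 * (n : ℝ≥0∞) * volume (Metric.ball (0 : EuclideanSpace ℝ (Fin n)) 1) *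
        ∫⁻ x, ENNReal.ofReal |f x| ∂volume)) := by
  classical
  obtain ⟨hsm, hcs⟩ := hf
  have hfc : Continuous f := hsm.continuous
  have hfm : Measurable f := hfc.measurable
  haveI : Nontrivial (EuclideanSpace ℝ (Fin n)) :=
    Module.nontrivial_of_finrank_pos (R := ℝ) (by rw [finrank_euclideanSpace_fin]; omega)
  have hdim : Module.finrank ℝ (EuclideanSpace ℝ (Fin n)) = n := finrank_euclideanSpace_fin
  obtain ⟨Lnn, hLip⟩ := hsm.lipschitzWith_of_hasCompactSupport hcs (by simp)
  set L : ℝ := (Lnn : ℝ) with hLdef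
  have hL0 : 0 ≤ L := Lnn.coe_nonneg
  obtain ⟨r₀, hr₀⟩ := hcs.isBounded.subset_closedBall 0
  set R : ℝ := 2 * max r₀ 1 with hRdef
  have hR1 : 1 ≤ R := by
    have := le_max_right r₀ 1; simp only [hRdef]; linarith
  have hR : 0 < R := by linarith
  have hsupp : ∀ x : EuclideanSpace ℝ (Fin n), f x ≠ 0 → ‖x‖ ≤ R / 2 := by
    intro x hx
    have hx' : x ∈ Metric.closedBall (0 : EuclideanSpace ℝ (Fin n)) r₀ :=
      hr₀ (subset_tsupport f hx)
    rw [Metric.mem_closedBall, dist_zero_right] at hx'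
    have : r₀ ≤ max r₀ 1 := le_max_left _ _
    simp only [hRdef]; linarith
  set I := ∫⁻ x, ENNReal.ofReal |f x| ∂volume with hIdef
  have hInt : Integrable f volume := hfc.integrable_of_hasCompactSupport hcs
  have hI : I ≠ ⊤ := by
    have := hInt.abs.lintegral_lt_top
    exact this.ne
  set ω := volume (Metric.ball (0 : EuclideanSpace ℝ (Fin n)) 1) with hωdef
  have hω : ω ≠ ⊤ := measure_ball_lt_top.ne
  set V := volume (Metric.closedBall (0 : EuclideanSpace ℝ (Fin n)) (2*R)) with hVdef
  have hV : V ≠ ⊤ := measure_closedBall_lt_top.ne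
  set g : EuclideanSpace ℝ (Fin n) → ℝ≥0∞ :=
    fun h => ∫⁻ x, ENNReal.ofReal |f (x + h) - f x| ∂volume with hgdef
  have hmeas1 : ∀ h : EuclideanSpace ℝ (Fin n),
      Measurable fun x : EuclideanSpace ℝ (Fin n) => ENNReal.ofReal |f (x + h) - f x| := by
    intro h; fun_prop
  -- rewriting besov
  have besov_eq : ∀ α : ℝ, besov n α f
      = ∫⁻ h, g h * (ENNReal.ofReal (‖h‖ ^ ((n:ℝ) + α)))⁻¹ ∂volume := by
    intro α
    refine lintegral_congr fun h => ?_
    by_cases hh : h = (0 : EuclideanSpace ℝ (Fin n))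
    · subst hh
      have hg0 : g 0 = 0 := by
        simp [hgdef]
      simp [hg0, add_zero, sub_self, abs_zero, zero_div]
    · have hc : 0 < ‖h‖ ^ ((n:ℝ)+α) := Real.rpow_pos_of_pos (norm_pos_iff.2 hh) _
      calc ∫⁻ x, ENNReal.ofReal (|f (x + h) - f x| / ‖h‖ ^ ((n:ℝ)+α)) ∂volume
          = ∫⁻ x, ENNReal.ofReal |f (x + h) - f x|
              * (ENNReal.ofReal (‖h‖ ^ ((n:ℝ)+α)))⁻¹ ∂volume := by
            refine lintegral_congr fun x => ?_
            rw [ENNReal.ofReal_div_of_pos hc, div_eq_mul_inv]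
        _ = g h * (ENNReal.ofReal (‖h‖ ^ ((n:ℝ)+α)))⁻¹ :=
            lintegral_mul_const'' _ (hmeas1 h).aemeasurable
  -- the outer part: exact computation
  have hgouter : ∀ h : EuclideanSpace ℝ (Fin n), R < ‖h‖ → g h = 2 * I := by
    intro h hh
    have hpt : ∀ x : EuclideanSpace ℝ (Fin n),
        |f (x + h) - f x| = |f (x + h)| + |f x| := by
      intro x
      by_cases hx : f x = 0
      · simp [hx]
      · have hx' : ‖x‖ ≤ R / 2 := hsupp x hx
        have hfx : f (x + h) = 0 := by
          by_contra hne
          have h1 : ‖x + h‖ ≤ R / 2 := hsupp _ hne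
          have h2 : ‖h‖ ≤ ‖x + h‖ + ‖x‖ := by
            simpa using norm_add_le (x + h) (-x)
          linarith
        simp [hfx, abs_sub_comm]
    have : g h = (∫⁻ x, ENNReal.ofReal |f (x + h)| ∂volume)
        + ∫⁻ x, ENNReal.ofReal |f x| ∂volume := by
      rw [hgdef]
      simp only []
      rw [← lintegral_add_left (by fun_prop)]
      refine lintegral_congr fun x => ?_
      rw [hpt x, ENNReal.ofReal_add (abs_nonneg _) (abs_nonneg _)]
    rw [this, (measurePreserving_add_right volume h).lintegral_comp
      (f := fun y => ENNReal.ofReal |f y|) (by fun_prop)]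
    rw [two_mul]
  have hB : ∀ α : ℝ, 0 < α →
      ∫⁻ h in (Metric.closedBall (0 : EuclideanSpace ℝ (Fin n)) R)ᶜ,
        g h * (ENNReal.ofReal (‖h‖ ^ ((n:ℝ) + α)))⁻¹ ∂volume
      = 2 * I * ((n : ℝ≥0∞) * ω * ENNReal.ofReal (R ^ (-α) / α)) := by
    intro α hα
    have hmem : ∀ h : EuclideanSpace ℝ (Fin n),
        h ∈ (Metric.closedBall (0 : EuclideanSpace ℝ (Fin n)) R)ᶜ ↔ R < ‖h‖ := by
      intro h
      simp [Metric.mem_closedBall, dist_zero_right, not_le]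
    calc ∫⁻ h in (Metric.closedBall (0 : EuclideanSpace ℝ (Fin n)) R)ᶜ,
          g h * (ENNReal.ofReal (‖h‖ ^ ((n:ℝ) + α)))⁻¹ ∂volume
        = ∫⁻ h in (Metric.closedBall (0 : EuclideanSpace ℝ (Fin n)) R)ᶜ,
          2 * I * (ENNReal.ofReal (‖h‖ ^ ((n:ℝ) + α)))⁻¹ ∂volume := by
          refine setLIntegral_congr_fun measurableSet_closedBall.compl
            (fun h hh => ?_)
          rw [hgouter h ((hmem h).1 hh)]
      _ = 2 * I * ∫⁻ h in (Metric.closedBall (0 : EuclideanSpace ℝ (Fin n)) R)ᶜ,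
          (ENNReal.ofReal (‖h‖ ^ ((n:ℝ) + α)))⁻¹ ∂volume :=
          lintegral_const_mul' _ _ (by finiteness)
      _ = 2 * I * ∫⁻ h : EuclideanSpace ℝ (Fin n),
          (Ioi R).indicator (fun y => ENNReal.ofReal (y ^ (-((n:ℝ) + α)))) ‖h‖ ∂volume := by
          congr 1
          rw [← lintegral_indicator measurableSet_closedBall.compl]
          refine lintegral_congr fun h => ?_
          by_cases hh : R < ‖h‖
          · rw [Set.indicator_of_mem ((hmem h).2 hh),
              Set.indicator_of_mem (show ‖h‖ ∈ Ioi R from hh)]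
            have hpos : 0 < ‖h‖ ^ ((n:ℝ) + α) :=
              Real.rpow_pos_of_pos (hR.trans hh) _
            rw [Real.rpow_neg (le_of_lt (hR.trans hh)), ENNReal.ofReal_inv_of_pos hpos]
          · rw [Set.indicator_of_notMem (fun hmem' => hh ((hmem h).1 hmem')),
              Set.indicator_of_notMem (show ‖h‖ ∉ Ioi R from hh)]
      _ = 2 * I * ((n : ℝ≥0∞) * ω *
          ∫⁻ y in Ioi (0:ℝ), ENNReal.ofReal (y ^ (n - 1)) *
            (Ioi R).indicator (fun y => ENNReal.ofReal (y ^ (-((n:ℝ) + α)))) y ∂volume) := by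
          rw [lintegral_fun_norm_addHaar' volume _
            (Measurable.indicator (by fun_prop) measurableSet_Ioi), hdim]
      _ = 2 * I * ((n : ℝ≥0∞) * ω *
          ∫⁻ y in Ioi R, ENNReal.ofReal (y ^ (-1 - α)) ∂volume) := by
          congr 2
          have : (fun y : ℝ => ENNReal.ofReal (y ^ (n - 1)) *
              (Ioi R).indicator (fun y => ENNReal.ofReal (y ^ (-((n:ℝ) + α)))) y)
              = (Ioi R).indicator (fun y : ℝ => ENNReal.ofReal (y ^ (n - 1)) *
                ENNReal.ofReal (y ^ (-((n:ℝ) + α)))) := by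
            funext y
            by_cases hy : y ∈ Ioi R
            · rw [Set.indicator_of_mem hy, Set.indicator_of_mem hy]
            · rw [Set.indicator_of_notMem hy, Set.indicator_of_notMem hy, mul_zero]
          rw [this, lintegral_indicator measurableSet_Ioi,
            Measure.restrict_restrict measurableSet_Ioi, Set.Ioi_inter_Ioi,
            max_eq_left hR.le]
          refine setLIntegral_congr_fun measurableSet_Ioi (fun y hy => ?_)
          have hy0 : 0 < y := hR.trans hy
          rw [← ENNReal.ofReal_mul (by positivity), ← Real.rpow_natCast y (n-1),
            ← Real.rpow_add hy0]
          congr 2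
          push_cast [Nat.cast_sub hn]
          ring
      _ = 2 * I * ((n : ℝ≥0∞) * ω * ENNReal.ofReal (R ^ (-α) / α)) := by
          rw [lintegral_Ioi_rpow_exact hR hα]
  -- inner part: uniform bound
  have hgle : ∀ h : EuclideanSpace ℝ (Fin n), ‖h‖ ≤ R →
      g h ≤ ENNReal.ofReal (L * ‖h‖) * V := by
    intro h hh
    have hpt : ∀ x : EuclideanSpace ℝ (Fin n), ENNReal.ofReal |f (x + h) - f x|
        ≤ (Metric.closedBall (0 : EuclideanSpace ℝ (Fin n)) (2*R)).indicator
            (fun _ => ENNReal.ofReal (L * ‖h‖)) x := by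
      intro x
      by_cases hx : x ∈ Metric.closedBall (0 : EuclideanSpace ℝ (Fin n)) (2*R)
      · rw [Set.indicator_of_mem hx]
        refine ENNReal.ofReal_le_ofReal ?_
        have := hLip.dist_le_mul (x + h) x
        rw [Real.dist_eq, dist_eq_norm, add_sub_cancel_left] at this
        exact this
      · rw [Set.indicator_of_notMem hx]
        rw [Metric.mem_closedBall, dist_zero_right, not_le] at hx
        have hfx : f x = 0 := by
          by_contra hne
          have := hsupp x hne
          linarith
        have hfxh : f (x + h) = 0 := by
          by_contra hne
          have h1 := hsupp _ hne
          have h2 : ‖x‖ ≤ ‖x + h‖ + ‖h‖ := by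
            simpa using norm_add_le (x + h) (-h)
          linarith
        simp [hfx, hfxh]
    calc g h ≤ ∫⁻ x, (Metric.closedBall (0 : EuclideanSpace ℝ (Fin n)) (2*R)).indicator
          (fun _ => ENNReal.ofReal (L * ‖h‖)) x ∂volume := lintegral_mono hpt
      _ = ENNReal.ofReal (L * ‖h‖) * V := by
          rw [lintegral_indicator measurableSet_closedBall, setLIntegral_const]
  set Jc : ℝ≥0∞ := ∫⁻ y in Ioc (0:ℝ) R,
      ENNReal.ofReal (Real.sqrt R * y ^ (-(1/2) : ℝ)) ∂volume with hJcdef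
  have hJc : Jc ≠ ⊤ := by
    have hint : IntegrableOn (fun y : ℝ => Real.sqrt R * y ^ (-(1/2) : ℝ))
        (Ioc (0:ℝ) R) volume := by
      have : IntervalIntegrable (fun y : ℝ => y ^ (-(1/2) : ℝ)) volume 0 R :=
        intervalIntegral.intervalIntegrable_rpow' (by norm_num)
      rw [intervalIntegrable_iff_integrableOn_Ioc_of_le hR.le] at this
      exact this.const_mul _
    exact hint.setLIntegral_lt_top.ne
  set K : ℝ≥0∞ := ENNReal.ofReal L * V * ((n : ℝ≥0∞) * ω * Jc) with hKdef
  have hK : K ≠ ⊤ := by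
    rw [hKdef]
    finiteness
  have hA : ∀ α : ℝ, α ∈ Ioc (0:ℝ) (1/2) →
      ∫⁻ h in Metric.closedBall (0 : EuclideanSpace ℝ (Fin n)) R,
        g h * (ENNReal.ofReal (‖h‖ ^ ((n:ℝ) + α)))⁻¹ ∂volume ≤ K := by
    intro α hα
    obtain ⟨hα0, hα2⟩ := hα
    have hbound : ∀ h : EuclideanSpace ℝ (Fin n), h ∈ Metric.closedBall (0 : EuclideanSpace ℝ (Fin n)) R →
        g h * (ENNReal.ofReal (‖h‖ ^ ((n:ℝ) + α)))⁻¹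
          ≤ ENNReal.ofReal L * V * ENNReal.ofReal (‖h‖ ^ (1 - ((n:ℝ) + α))) := by
      intro h hh
      rw [Metric.mem_closedBall, dist_zero_right] at hh
      by_cases h0 : h = (0 : EuclideanSpace ℝ (Fin n))
      · subst h0
        have hg0 : g 0 = 0 := by simp [hgdef]
        rw [hg0, zero_mul]
        exact zero_le
      · have hpos : 0 < ‖h‖ := norm_pos_iff.2 h0
        have hcpos : 0 < ‖h‖ ^ ((n:ℝ) + α) := Real.rpow_pos_of_pos hpos _
        calc g h * (ENNReal.ofReal (‖h‖ ^ ((n:ℝ) + α)))⁻¹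
            ≤ (ENNReal.ofReal (L * ‖h‖) * V) * (ENNReal.ofReal (‖h‖ ^ ((n:ℝ) + α)))⁻¹ :=
              mul_le_mul_left (hgle h hh) _
          _ = ENNReal.ofReal L * V * ENNReal.ofReal (‖h‖ ^ (1 - ((n:ℝ) + α))) := by
              rw [ENNReal.ofReal_mul hL0]
              have : ENNReal.ofReal ‖h‖ * (ENNReal.ofReal (‖h‖ ^ ((n:ℝ) + α)))⁻¹
                  = ENNReal.ofReal (‖h‖ ^ (1 - ((n:ℝ) + α))) := by
                rw [← ENNReal.ofReal_inv_of_pos hcpos,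
                  ← ENNReal.ofReal_mul (norm_nonneg _)]
                congr 1
                rw [← Real.rpow_neg (norm_nonneg _)]
                nth_rewrite 1 [← Real.rpow_one ‖h‖]
                rw [← Real.rpow_add hpos]
                congr 1
              calc ENNReal.ofReal L * ENNReal.ofReal ‖h‖ * V
                    * (ENNReal.ofReal (‖h‖ ^ ((n:ℝ) + α)))⁻¹
                  = ENNReal.ofReal L * V * (ENNReal.ofReal ‖h‖
                    * (ENNReal.ofReal (‖h‖ ^ ((n:ℝ) + α)))⁻¹) := by ring
                _ = _ := by rw [this]
    calc ∫⁻ h in Metric.closedBall (0 : EuclideanSpace ℝ (Fin n)) R,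
          g h * (ENNReal.ofReal (‖h‖ ^ ((n:ℝ) + α)))⁻¹ ∂volume
        ≤ ∫⁻ h in Metric.closedBall (0 : EuclideanSpace ℝ (Fin n)) R,
          ENNReal.ofReal L * V * ENNReal.ofReal (‖h‖ ^ (1 - ((n:ℝ) + α))) ∂volume := by
          refine lintegral_mono_ae ?_
          filter_upwards [ae_restrict_mem measurableSet_closedBall] with h hh
          exact hbound h hh
      _ = ENNReal.ofReal L * V * ∫⁻ h in Metric.closedBall (0 : EuclideanSpace ℝ (Fin n)) R,
          ENNReal.ofReal (‖h‖ ^ (1 - ((n:ℝ) + α))) ∂volume :=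
          lintegral_const_mul' _ _ (by finiteness)
      _ = ENNReal.ofReal L * V * ∫⁻ h : EuclideanSpace ℝ (Fin n),
          (Iic R).indicator (fun y => ENNReal.ofReal (y ^ (1 - ((n:ℝ) + α)))) ‖h‖ ∂volume := by
          congr 1
          rw [← lintegral_indicator measurableSet_closedBall]
          refine lintegral_congr fun h => ?_
          by_cases hh : ‖h‖ ≤ R
          · rw [Set.indicator_of_mem (show h ∈ Metric.closedBall (0 : EuclideanSpace ℝ (Fin n)) R by
              rwa [Metric.mem_closedBall, dist_zero_right]),
              Set.indicator_of_mem (show ‖h‖ ∈ Iic R from hh)]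
          · rw [Set.indicator_of_notMem (show h ∉ Metric.closedBall (0 : EuclideanSpace ℝ (Fin n)) R by
              rwa [Metric.mem_closedBall, dist_zero_right]),
              Set.indicator_of_notMem (show ‖h‖ ∉ Iic R from hh)]
      _ = ENNReal.ofReal L * V * ((n : ℝ≥0∞) * ω *
          ∫⁻ y in Ioi (0:ℝ), ENNReal.ofReal (y ^ (n - 1)) *
            (Iic R).indicator (fun y => ENNReal.ofReal (y ^ (1 - ((n:ℝ) + α)))) y ∂volume) := by
          rw [lintegral_fun_norm_addHaar' volume _
            (Measurable.indicator (by fun_prop) measurableSet_Iic), hdim]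
      _ = ENNReal.ofReal L * V * ((n : ℝ≥0∞) * ω *
          ∫⁻ y in Ioc (0:ℝ) R, ENNReal.ofReal (y ^ (-α)) ∂volume) := by
          congr 2
          have : (fun y : ℝ => ENNReal.ofReal (y ^ (n - 1)) *
              (Iic R).indicator (fun y => ENNReal.ofReal (y ^ (1 - ((n:ℝ) + α)))) y)
              = (Iic R).indicator (fun y : ℝ => ENNReal.ofReal (y ^ (n - 1)) *
                ENNReal.ofReal (y ^ (1 - ((n:ℝ) + α)))) := by
            funext y
            by_cases hy : y ∈ Iic R
            · rw [Set.indicator_of_mem hy, Set.indicator_of_mem hy]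
            · rw [Set.indicator_of_notMem hy, Set.indicator_of_notMem hy, mul_zero]
          rw [this, lintegral_indicator measurableSet_Iic,
            Measure.restrict_restrict measurableSet_Iic, Set.inter_comm,
            Set.Ioi_inter_Iic]
          refine setLIntegral_congr_fun measurableSet_Ioc (fun y hy => ?_)
          have hy0 : 0 < y := hy.1
          rw [← ENNReal.ofReal_mul (by positivity), ← Real.rpow_natCast y (n-1),
            ← Real.rpow_add hy0]
          congr 2
          push_cast [Nat.cast_sub hn]
          ring
      _ ≤ ENNReal.ofReal L * V * ((n : ℝ≥0∞) * ω * Jc) := by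
          refine mul_le_mul_right (mul_le_mul_right ?_ _) _
          refine setLIntegral_mono_ae (by fun_prop) ?_
          filter_upwards [] with y
          intro hy
          refine ENNReal.ofReal_le_ofReal ?_
          obtain ⟨hy0, hyR⟩ := hy
          rcases le_or_gt y 1 with hy1 | hy1
          · have h1 : y ^ (-α) ≤ y ^ (-(1/2) : ℝ) :=
              Real.rpow_le_rpow_of_exponent_ge hy0 hy1 (by linarith)
            have h2 : (1:ℝ) ≤ Real.sqrt R := Real.one_le_sqrt.2 hR1
            nlinarith [Real.rpow_nonneg hy0.le (-(1/2) : ℝ)]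
          · have h1 : y ^ (-α) ≤ 1 :=
              Real.rpow_le_one_of_one_le_of_nonpos hy1.le (by linarith)
            have h2 : (1:ℝ) ≤ Real.sqrt R * y ^ (-(1/2) : ℝ) := by
              rw [Real.sqrt_eq_rpow]
              have h3 : y ^ ((1:ℝ)/2) ≤ R ^ ((1:ℝ)/2) :=
                Real.rpow_le_rpow hy0.le hyR (by norm_num)
              have h4 : y ^ ((1:ℝ)/2) * y ^ (-(1/2) : ℝ) = 1 := by
                rw [← Real.rpow_add hy0]
                norm_num
              have h5 : 0 < y ^ (-(1/2) : ℝ) := Real.rpow_pos_of_pos hy0 _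
              nlinarith
            linarith
      _ = K := rfl
  -- assembly
  have hsplit : ∀ α : ℝ, ENNReal.ofReal α * besov n α f
      = ENNReal.ofReal α * (∫⁻ h in Metric.closedBall (0 : EuclideanSpace ℝ (Fin n)) R,
          g h * (ENNReal.ofReal (‖h‖ ^ ((n:ℝ) + α)))⁻¹ ∂volume)
        + ENNReal.ofReal α * (∫⁻ h in (Metric.closedBall (0 : EuclideanSpace ℝ (Fin n)) R)ᶜ,
          g h * (ENNReal.ofReal (‖h‖ ^ ((n:ℝ) + α)))⁻¹ ∂volume) := by
    intro α
    rw [besov_eq α, ← lintegral_add_compl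
      (fun h : EuclideanSpace ℝ (Fin n) => g h * (ENNReal.ofReal (‖h‖ ^ ((n:ℝ) + α)))⁻¹)
      (measurableSet_closedBall :
        MeasurableSet (Metric.closedBall (0 : EuclideanSpace ℝ (Fin n)) R)), mul_add]
  have hof : Tendsto (fun α : ℝ => ENNReal.ofReal α) (𝓝[>] (0:ℝ)) (𝓝 0) := by
    have h0 : Tendsto (fun α : ℝ => α) (𝓝[>] (0:ℝ)) (𝓝 0) :=
      tendsto_id.mono_right nhdsWithin_le_nhds
    simpa [Function.comp_def] using (ENNReal.continuous_ofReal.tendsto 0).comp h0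
  have T1 : Tendsto (fun α : ℝ => ENNReal.ofReal α *
      ∫⁻ h in Metric.closedBall (0 : EuclideanSpace ℝ (Fin n)) R,
        g h * (ENNReal.ofReal (‖h‖ ^ ((n:ℝ) + α)))⁻¹ ∂volume) (𝓝[>] (0:ℝ)) (𝓝 0) := by
    have hlim : Tendsto (fun α : ℝ => ENNReal.ofReal α * K) (𝓝[>] (0:ℝ)) (𝓝 0) := by
      simpa using ENNReal.Tendsto.mul_const hof (Or.inr hK)
    refine tendsto_of_tendsto_of_tendsto_of_le_of_le' tendsto_const_nhds hlim
      (Eventually.of_forall fun α => zero_le) ?_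
    filter_upwards [Ioc_mem_nhdsGT
      (show (0:ℝ) < 1/2 by norm_num)] with α hα
    exact mul_le_mul_right (hA α hα) _
  have hRlim : Tendsto (fun α : ℝ => ENNReal.ofReal (R ^ (-α))) (𝓝[>] (0:ℝ)) (𝓝 1) := by
    have hc : ContinuousAt (fun t : ℝ => R ^ t) 0 := Real.continuousAt_const_rpow hR.ne'
    have hneg : Tendsto (fun a : ℝ => -a) (𝓝 (0:ℝ)) (𝓝 (0:ℝ)) := by
      simpa using continuous_neg.tendsto (0:ℝ)
    have h1 : Tendsto (fun α : ℝ => R ^ (-α)) (𝓝 (0:ℝ)) (𝓝 1) := by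
      have := hc.tendsto.comp hneg
      simpa [Real.rpow_zero, Function.comp_def] using this
    have h2 : Tendsto (fun α : ℝ => R ^ (-α)) (𝓝[>] (0:ℝ)) (𝓝 1) :=
      h1.mono_left (nhdsWithin_le_nhds : 𝓝[>] (0:ℝ) ≤ 𝓝 0)
    have := (ENNReal.continuous_ofReal.tendsto 1).comp h2
    simpa [Function.comp_def] using this
  have T2 : Tendsto (fun α : ℝ => ENNReal.ofReal α *
      ∫⁻ h in (Metric.closedBall (0 : EuclideanSpace ℝ (Fin n)) R)ᶜ,
        g h * (ENNReal.ofReal (‖h‖ ^ ((n:ℝ) + α)))⁻¹ ∂volume) (𝓝[>] (0:ℝ))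
      (𝓝 (2 * I * ((n : ℝ≥0∞) * ω))) := by
    have heq : (fun α : ℝ => 2 * I * ((n : ℝ≥0∞) * ω) * ENNReal.ofReal (R ^ (-α)))
        =ᶠ[𝓝[>] (0:ℝ)] (fun α : ℝ => ENNReal.ofReal α *
          ∫⁻ h in (Metric.closedBall (0 : EuclideanSpace ℝ (Fin n)) R)ᶜ,
            g h * (ENNReal.ofReal (‖h‖ ^ ((n:ℝ) + α)))⁻¹ ∂volume) := by
      filter_upwards [self_mem_nhdsWithin] with α hα
      have hα0 : (0:ℝ) < α := hα
      have hcancel : ENNReal.ofReal α * ENNReal.ofReal (R ^ (-α) / α)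
          = ENNReal.ofReal (R ^ (-α)) := by
        rw [← ENNReal.ofReal_mul hα0.le]
        congr 1
        field_simp
      rw [hB α hα0]
      calc 2 * I * ((n : ℝ≥0∞) * ω) * ENNReal.ofReal (R ^ (-α))
          = 2 * I * ((n : ℝ≥0∞) * ω) * (ENNReal.ofReal α * ENNReal.ofReal (R ^ (-α) / α)) := by
            rw [hcancel]
        _ = ENNReal.ofReal α * (2 * I * ((n : ℝ≥0∞) * ω * ENNReal.ofReal (R ^ (-α) / α))) := by
            ring
    have hlim : Tendsto (fun α : ℝ => 2 * I * ((n : ℝ≥0∞) * ω) * ENNReal.ofReal (R ^ (-α)))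
        (𝓝[>] (0:ℝ)) (𝓝 (2 * I * ((n : ℝ≥0∞) * ω))) := by
      simpa using ENNReal.Tendsto.const_mul hRlim (Or.inl one_ne_zero)
    exact hlim.congr' heq
  have hsum := T1.add T2
  rw [zero_add] at hsum
  have hfinal := hsum.congr fun α => (hsplit α).symm
  convert hfinal using 2
  ring
end

section
/- Capacitary strong-type inequality: if t ↦ c(t) is a nonincreasing nonnegative function on [0,∞), then (∫_0^∞ c(t)^{n/(n−α)} d(t^{n/(n−α)}))^{(n−α)/n} ≤ ∫_0^∞ c(t) dt. -/
open MeasureTheory Set ENNReal Filter Topology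

private lemma key13 (p : ℝ) (hp : 1 < p) (c : ℝ → ℝ) (hc : ∀ t, 0 ≤ c t) (hmono : Antitone c) :
    (∫⁻ t in Set.Ioi (0:ℝ), (ENNReal.ofReal (c t)) ^ p * ENNReal.ofReal (p * t ^ (p-1))) ≤
      (∫⁻ t in Set.Ioi (0:ℝ), ENNReal.ofReal (c t)) ^ p := by
  have hp0 : (0:ℝ) < p := lt_trans one_pos hp
  have hp1 : (0:ℝ) ≤ p - 1 := by linarith
  set I : ℝ≥0∞ := ∫⁻ t in Set.Ioi (0:ℝ), ENNReal.ofReal (c t) with hIdef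
  by_cases hI : I = ⊤
  · rw [hI, ENNReal.top_rpow_of_pos hp0]; exact le_top
  -- measurability
  have hcm : Measurable c := hmono.measurable
  -- right-continuous version
  set e : ℝ → ℝ := Function.rightLim c with hedef
  have he_anti : Antitone e := hmono.rightLim
  have he_le : ∀ x, e x ≤ c x := fun x => hmono.rightLim_le le_rfl
  have he_nonneg : ∀ x, 0 ≤ e x := fun x =>
    le_trans (hc (x+1)) (hmono.le_rightLim (lt_add_one x))
  have he_m : Measurable e := he_anti.measurable
  have hae : ∀ᵐ x ∂(volume : Measure ℝ), c x = e x := by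
    have hcount : {x | ¬ ContinuousAt c x}.Countable := hmono.countable_not_continuousAt
    have : (volume : Measure ℝ) {x | ¬ ContinuousAt c x} = 0 := hcount.measure_zero _
    filter_upwards [measure_eq_zero_iff_ae_notMem.1 this] with x hx
    simp only [mem_setOf_eq, not_not] at hx
    exact (rightLim_eq_of_tendsto hx.continuousWithinAt).symm
  -- replace c by e in LHS
  have hcongr : (∫⁻ t in Set.Ioi (0:ℝ), (ENNReal.ofReal (c t)) ^ p * ENNReal.ofReal (p * t ^ (p-1)))
      = ∫⁻ t in Set.Ioi (0:ℝ), (ENNReal.ofReal (e t)) ^ p * ENNReal.ofReal (p * t ^ (p-1)) := by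
    refine lintegral_congr_ae (ae_restrict_of_ae ?_)
    filter_upwards [hae] with x hx
    rw [hx]
  rw [hcongr]
  -- real integral facts
  have hInt : IntegrableOn c (Set.Ioi (0:ℝ)) volume := by
    refine ⟨hcm.aestronglyMeasurable, ?_⟩
    rw [hasFiniteIntegral_iff_ofReal (ae_of_all _ fun t => hc t)]
    exact lt_of_le_of_ne le_top hI
  have hItoReal : ∫ t in Set.Ioi (0:ℝ), c t = I.toReal := by
    rw [hIdef, integral_eq_lintegral_of_nonneg_ae (ae_of_all _ fun t => hc t)
      hcm.aestronglyMeasurable]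
  have hIR_nonneg : 0 ≤ I.toReal := ENNReal.toReal_nonneg
  set F : ℝ → ℝ := fun u => ∫ x in (0:ℝ)..u, c x with hFdef
  set g : ℝ → ℝ := fun u => (F u) ^ p with hgdef
  set φ : ℝ → ℝ := fun x => p * x ^ (p-1) * (e x) ^ p with hphidef
  have hφm : Measurable φ := by
    apply Measurable.mul
    · exact measurable_const.mul (measurable_id.pow measurable_const)
    · exact he_m.pow measurable_const
  have hφ_nonneg : ∀ x ∈ Set.Ioi (0:ℝ), 0 ≤ φ x := fun x hx => by
    have hx0 : (0:ℝ) ≤ x := le_of_lt hx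
    exact mul_nonneg (mul_nonneg hp0.le (Real.rpow_nonneg hx0 _)) (Real.rpow_nonneg (he_nonneg x) _)
  -- main estimate on each Ioc 0 b
  have hmain : ∀ b : ℝ, 0 ≤ b →
      (∫⁻ t in Set.Ioc (0:ℝ) b, (ENNReal.ofReal (e t)) ^ p * ENNReal.ofReal (p * t ^ (p-1)))
        ≤ I ^ p := by
    intro b hb
    have hinta : ∀ u v, 0 ≤ u → IntervalIntegrable c volume u v → True := fun _ _ _ _ => trivial
    have hintb : IntegrableOn c (Set.Icc 0 b) volume := by
      refine Integrable.mono' (integrable_const (c 0)) hcm.aestronglyMeasurable ?_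
      refine (ae_restrict_iff' measurableSet_Icc).2 (ae_of_all _ fun x hx => ?_)
      rw [Real.norm_of_nonneg (hc x)]
      exact hmono hx.1
    have hii : ∀ u, u ∈ Set.Icc (0:ℝ) b → IntervalIntegrable c volume 0 u := by
      intro u hu
      rw [intervalIntegrable_iff_integrableOn_Icc_of_le hu.1]
      exact hintb.mono_set (Icc_subset_Icc le_rfl hu.2)
    have hFcont : ContinuousOn F (Set.Icc 0 b) := by
      rw [hFdef, ← uIcc_of_le hb]
      exact intervalIntegral.continuousOn_primitive_interval (by rwa [uIcc_of_le hb])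
    have hgcont : ContinuousOn g (Set.Icc 0 b) := hFcont.rpow_const (fun x _ => Or.inr hp0.le)
    have hFderiv : ∀ x ∈ Set.Ioo (0:ℝ) b, HasDerivWithinAt F (e x) (Set.Ioi x) x := by
      intro x hx
      have h1 : IntervalIntegrable c volume 0 x := hii x ⟨hx.1.le, hx.2.le⟩
      have h2 : StronglyMeasurableAtFilter c (𝓝[>] x) volume :=
        hcm.stronglyMeasurable.stronglyMeasurableAtFilter
      have h3 : Tendsto c (𝓝[>] x ⊓ ae volume) (𝓝 (e x)) :=
        (hmono.tendsto_rightLim x).mono_left inf_le_left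
      exact (intervalIntegral.integral_hasDerivWithinAt_of_tendsto_ae_right h1 h2 h3).mono
        Ioi_subset_Ici_self
    have hgderiv : ∀ x ∈ Set.Ioo (0:ℝ) b,
        HasDerivWithinAt g (p * (F x) ^ (p-1) * e x) (Set.Ioi x) x := by
      intro x hx
      have h1 : HasDerivAt (fun y : ℝ => y ^ p) (p * (F x) ^ (p-1)) (F x) := by
        simpa [mul_comm] using Real.hasDerivAt_rpow_const (x := F x) (p := p) (Or.inr hp.le)
      exact h1.comp_hasDerivWithinAt x (hFderiv x hx)
    have hF_nonneg : ∀ u, 0 ≤ u → 0 ≤ F u := by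
      intro u hu
      rw [hFdef]
      apply intervalIntegral.integral_nonneg hu fun x _ => hc x
    have hφ_le : ∀ x ∈ Set.Ioo (0:ℝ) b, φ x ≤ p * (F x) ^ (p-1) * e x := by
      intro x hx
      have hxe : x * e x ≤ F x := by
        have hconst : ∫ s in (0:ℝ)..x, e x = x * e x := by simp
        rw [← hconst, hFdef]
        refine intervalIntegral.integral_mono_on hx.1.le ?_ (hii x ⟨hx.1.le, hx.2.le⟩) ?_
        · exact intervalIntegrable_const
        · intro s hs
          exact hmono.rightLim_le hs.2
      have hxe0 : 0 ≤ x * e x := mul_nonneg hx.1.le (he_nonneg x)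
      have h1 : x ^ (p-1) * e x ^ p = (x * e x) ^ (p-1) * e x := by
        rcases eq_or_lt_of_le (he_nonneg x) with h | h
        · simp [← h, Real.zero_rpow hp0.ne']
        · rw [Real.mul_rpow hx.1.le (he_nonneg x)]
          have : e x ^ p = e x ^ (p-1) * e x := by
            rw [← Real.rpow_add_one h.ne' (p-1)]
            ring_nf
          rw [this]; ring
      have h2 : (x * e x) ^ (p-1) ≤ (F x) ^ (p-1) :=
        Real.rpow_le_rpow hxe0 hxe hp1
      calc φ x = p * ((x * e x) ^ (p-1) * e x) := by rw [hphidef]; dsimp only; rw [mul_assoc, h1]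
        _ ≤ p * ((F x) ^ (p-1) * e x) := by
            apply mul_le_mul_of_nonneg_left _ hp0.le
            exact mul_le_mul_of_nonneg_right h2 (he_nonneg x)
        _ = p * (F x) ^ (p-1) * e x := by ring
    -- integrability of φ on Icc 0 b
    have hφ_nonneg' : ∀ x ∈ Set.Icc (0:ℝ) b, 0 ≤ φ x := by
      intro x hx
      exact mul_nonneg (mul_nonneg hp0.le (Real.rpow_nonneg hx.1 _))
        (Real.rpow_nonneg (he_nonneg x) _)
    have hφint : IntegrableOn φ (Set.Icc 0 b) volume := by
      refine Integrable.mono' (integrable_const (p * b ^ (p-1) * (c 0) ^ p))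
        hφm.aestronglyMeasurable ?_
      refine (ae_restrict_iff' measurableSet_Icc).2 (ae_of_all _ fun x hx => ?_)
      rw [Real.norm_of_nonneg (hφ_nonneg' x hx)]
      have h1 : x ^ (p-1) ≤ b ^ (p-1) := Real.rpow_le_rpow hx.1 hx.2 hp1
      have h2 : e x ^ p ≤ (c 0) ^ p :=
        Real.rpow_le_rpow (he_nonneg x) ((he_le x).trans (hmono hx.1)) hp0.le
      calc p * x ^ (p-1) * e x ^ p ≤ p * b ^ (p-1) * e x ^ p := by
            apply mul_le_mul_of_nonneg_right _ (Real.rpow_nonneg (he_nonneg x) _)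
            exact mul_le_mul_of_nonneg_left h1 hp0.le
        _ ≤ p * b ^ (p-1) * (c 0) ^ p := by
            apply mul_le_mul_of_nonneg_left h2
            exact mul_nonneg hp0.le (Real.rpow_nonneg (hx.1.trans hx.2) _)
    -- FTC estimate
    have hFTC : ∫ y in (0:ℝ)..b, φ y ≤ g b - g 0 :=
      intervalIntegral.integral_le_sub_of_hasDeriv_right_of_le hb hgcont hgderiv hφint hφ_le
    have hg0 : g 0 = 0 := by
      rw [hgdef]; dsimp only
      rw [hFdef]; dsimp only
      rw [intervalIntegral.integral_same, Real.zero_rpow hp0.ne']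
    have hFb : F b ≤ I.toReal := by
      rw [← hItoReal, hFdef]; dsimp only
      rw [intervalIntegral.integral_of_le hb]
      exact setIntegral_mono_set hInt
        ((ae_restrict_iff' measurableSet_Ioi).2 (ae_of_all _ fun x _ => hc x))
        (HasSubset.Subset.eventuallyLE Ioc_subset_Ioi_self)
    have hgb : g b ≤ I.toReal ^ p := Real.rpow_le_rpow (hF_nonneg b hb) hFb hp0.le
    calc (∫⁻ t in Set.Ioc (0:ℝ) b, (ENNReal.ofReal (e t)) ^ p * ENNReal.ofReal (p * t ^ (p-1)))
        = ∫⁻ t in Set.Ioc (0:ℝ) b, ENNReal.ofReal (φ t) := by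
          refine setLIntegral_congr_fun measurableSet_Ioc (fun t ht => ?_)
          rw [ENNReal.ofReal_rpow_of_nonneg (he_nonneg t) hp0.le,
            ← ENNReal.ofReal_mul (Real.rpow_nonneg (he_nonneg t) _)]
          exact congrArg ENNReal.ofReal (by rw [hphidef]; ring)
      _ = ENNReal.ofReal (∫ t in Set.Ioc (0:ℝ) b, φ t) := by
          rw [← MeasureTheory.ofReal_integral_eq_lintegral_ofReal
            (hφint.mono_set Set.Ioc_subset_Icc_self)
            ((ae_restrict_iff' measurableSet_Ioc).2
              (ae_of_all _ fun x hx => hφ_nonneg x hx.1))]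
      _ = ENNReal.ofReal (∫ y in (0:ℝ)..b, φ y) := by
          rw [intervalIntegral.integral_of_le hb]
      _ ≤ ENNReal.ofReal (I.toReal ^ p) := by
          apply ENNReal.ofReal_le_ofReal
          refine hFTC.trans ?_
          rw [hg0, sub_zero]
          exact hgb
      _ = (ENNReal.ofReal I.toReal) ^ p := (ENNReal.ofReal_rpow_of_nonneg hIR_nonneg hp0.le).symm
      _ = I ^ p := by rw [ENNReal.ofReal_toReal hI]
  -- pass to the limit b → ∞
  set G : ℝ → ℝ≥0∞ := fun t => (ENNReal.ofReal (e t)) ^ p * ENNReal.ofReal (p * t ^ (p-1))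
    with hGdef
  have hGm : Measurable G := by
    apply Measurable.mul
    · exact (he_m.ennreal_ofReal).pow measurable_const
    · exact (measurable_const.mul (measurable_id.pow measurable_const)).ennreal_ofReal
  have hmonoInd : Monotone fun n : ℕ => (Set.Ioc (0:ℝ) (n:ℝ)).indicator G := by
    intro m k h t
    exact Set.indicator_le_indicator_of_subset
      (Set.Ioc_subset_Ioc le_rfl (Nat.cast_le.2 h)) (fun _ => zero_le) t
  have hsup : ∀ t, (⨆ n : ℕ, (Set.Ioc (0:ℝ) (n:ℝ)).indicator G t)
      = (Set.Ioi (0:ℝ)).indicator G t := by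
    intro t
    by_cases ht : 0 < t
    · obtain ⟨n, hn⟩ := exists_nat_ge t
      apply le_antisymm
      · exact iSup_le fun m =>
          Set.indicator_le_indicator_of_subset Set.Ioc_subset_Ioi_self (fun _ => zero_le) t
      · rw [Set.indicator_of_mem (Set.mem_Ioi.mpr ht)]
        refine le_trans ?_ (le_iSup _ n)
        rw [Set.indicator_of_mem (Set.mem_Ioc.mpr ⟨ht, hn⟩)]
    · simp [Set.indicator_apply, Set.mem_Ioc, Set.mem_Ioi, ht]
  calc (∫⁻ t in Set.Ioi (0:ℝ), G t) = ∫⁻ t, (Set.Ioi (0:ℝ)).indicator G t := by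
        rw [lintegral_indicator measurableSet_Ioi]
    _ = ∫⁻ t, ⨆ n : ℕ, (Set.Ioc (0:ℝ) (n:ℝ)).indicator G t := by
        refine lintegral_congr fun t => (hsup t).symm
    _ = ⨆ n : ℕ, ∫⁻ t, (Set.Ioc (0:ℝ) (n:ℝ)).indicator G t :=
        lintegral_iSup (fun n => hGm.indicator measurableSet_Ioc) hmonoInd
    _ = ⨆ n : ℕ, ∫⁻ t in Set.Ioc (0:ℝ) (n:ℝ), G t := by
        simp_rw [lintegral_indicator measurableSet_Ioc]
    _ ≤ I ^ p := iSup_le fun n => hmain (n:ℝ) (Nat.cast_nonneg n)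

theorem stmt13 (n : ℕ) (hn : 1 ≤ n) (α : ℝ) (hα : 0 < α ∧ α < (n : ℝ)) (c : ℝ → ℝ)
    (hc : ∀ t, 0 ≤ t → 0 ≤ c t) (hmono : AntitoneOn c (Set.Ici (0 : ℝ))) :
    (∫⁻ t in Set.Ioi (0 : ℝ), (ENNReal.ofReal (c t)) ^ ((n : ℝ) / ((n : ℝ) - α)) *
        ENNReal.ofReal (((n : ℝ) / ((n : ℝ) - α)) * t ^ (α / ((n : ℝ) - α)))) ^
      (((n : ℝ) - α) / (n : ℝ)) ≤ ∫⁻ t in Set.Ioi (0 : ℝ), ENNReal.ofReal (c t) := by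
  obtain ⟨hα0, hαn⟩ := hα
  have hn0 : (0:ℝ) < (n:ℝ) := lt_trans hα0 hαn
  have hna : (0:ℝ) < (n:ℝ) - α := by linarith
  set p : ℝ := (n:ℝ) / ((n:ℝ) - α) with hpdef
  have hp : 1 < p := by
    rw [hpdef, lt_div_iff₀ hna]; linarith
  have hp0 : 0 < p := lt_trans one_pos hp
  have hexp : α / ((n:ℝ) - α) = p - 1 := by
    rw [hpdef]; field_simp; ring
  have hexp2 : ((n:ℝ) - α) / (n:ℝ) = 1 / p := by
    rw [hpdef, one_div_div]
  set d : ℝ → ℝ := fun x => c (max x 0) with hddef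
  have hd_anti : Antitone d := fun x y hxy =>
    hmono (mem_Ici.mpr (le_max_right x 0)) (mem_Ici.mpr (le_max_right y 0))
      (max_le_max hxy le_rfl)
  have hd_nonneg : ∀ t, 0 ≤ d t := fun t => hc _ (le_max_right t 0)
  have hkey := key13 p hp d hd_nonneg hd_anti
  have hdc : ∀ t : ℝ, t ∈ Set.Ioi (0:ℝ) → d t = c t := by
    intro t ht
    rw [hddef]; dsimp only; rw [max_eq_left (le_of_lt ht)]
  have hLcongr : (∫⁻ t in Set.Ioi (0:ℝ), (ENNReal.ofReal (c t)) ^ p *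
        ENNReal.ofReal (p * t ^ (α / ((n:ℝ) - α))))
      = ∫⁻ t in Set.Ioi (0:ℝ), (ENNReal.ofReal (d t)) ^ p * ENNReal.ofReal (p * t ^ (p-1)) := by
    refine setLIntegral_congr_fun measurableSet_Ioi (fun t ht => ?_)
    rw [hdc t ht, hexp]
  have hRcongr : (∫⁻ t in Set.Ioi (0:ℝ), ENNReal.ofReal (c t))
      = ∫⁻ t in Set.Ioi (0:ℝ), ENNReal.ofReal (d t) :=
    setLIntegral_congr_fun measurableSet_Ioi (fun t ht => by rw [hdc t ht])
  rw [hRcongr, hexp2, hLcongr]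
  calc (∫⁻ t in Set.Ioi (0:ℝ), (ENNReal.ofReal (d t)) ^ p * ENNReal.ofReal (p * t ^ (p-1))) ^ (1/p)
      ≤ ((∫⁻ t in Set.Ioi (0:ℝ), ENNReal.ofReal (d t)) ^ p) ^ (1/p) :=
        ENNReal.rpow_le_rpow hkey (by positivity)
    _ = ∫⁻ t in Set.Ioi (0:ℝ), ENNReal.ofReal (d t) := by
        rw [← ENNReal.rpow_mul, mul_one_div, div_self hp0.ne', ENNReal.rpow_one]
end
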